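/- In the subspace T' = T∖{a} of the five-point space T, the regular closed subsets are exactly the eight sets B∖{a} where B ranges over the regular closed subsets of T, i.e. the sets ∅, {x,b}, {y,b}, {z,b}, {x,z,b}, {y,z,b}, {x,y,b}, and T∖{a}. -/

import Mathlib

/-!
The open sets of `T` are `T` and the sets that miss `b` and contain `x` and `y` whenever they
contain `a`. So every neighbourhood of `a` meets `T'`, i.e. `T'` is dense, and for a dense subspace
`D` the regular closed sets of `D` are exactly the traces `B ∩ D` of the regular closed sets `B`,
because `closure (U ∩ D) = closure U` for `U` open. The open sets of `T'` are `T'` and the sets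
missing `b`; hence the closure of a nonempty set just adds `b`, and the regular closed sets of `T'`
are `∅` and the sets containing `b` and some other point.
-/

/-- The five-point space `T = {x, y, z, a, b}` (five pairwise distinct points). -/
inductive Pt : Type
  | x | y | z | a | b
deriving DecidableEq

open Pt

/-- The topology on `T` generated by the subbasis `{x,z}`, `{y,z}`, `{x,a,y}`. -/
instance : TopologicalSpace Pt :=
  TopologicalSpace.generateFrom ({{x, z}, {y, z}, {x, a, y}} : Set (Set Pt))

open Set Topology TopologicalSpace

section DenseInducing

variable {X Y : Type*} [TopologicalSpace X] [TopologicalSpace Y] {f : Y → X}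

theorem Topology.IsInducing.closure_preimage_of_isOpen (hf : IsInducing f) (hd : DenseRange f)
    {U : Set X} (hU : IsOpen U) : closure (f ⁻¹' U) = f ⁻¹' closure U := by
  rw [hf.closure_eq_preimage_closure_image]
  congr 1
  exact (closure_mono (image_preimage_subset f U)).antisymm
    (closure_minimal (hd.subset_closure_image_preimage_of_isOpen hU) isClosed_closure)

theorem Topology.IsInducing.setOf_regularClosed_eq_image_preimage (hf : IsInducing f)
    (hd : DenseRange f) :
    {A : Set Y | A = closure (interior A)} =
      preimage f '' {B : Set X | B = closure (interior B)} := by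
  ext A
  constructor
  · intro (hA : A = closure (interior A))
    obtain ⟨W, hW, hWA⟩ := hf.isOpen_iff.1 (isOpen_interior (s := A))
    refine ⟨closure W, ?_, ?_⟩
    · exact (closure_mono (interior_maximal subset_closure hW)).antisymm
        (closure_minimal interior_subset isClosed_closure)
    · rw [← hf.closure_preimage_of_isOpen hd hW, hWA, ← hA]
  · rintro ⟨B, hB : B = closure (interior B), rfl⟩
    have hBc : IsClosed (f ⁻¹' B) := (hB ▸ isClosed_closure).preimage hf.continuous
    refine (closure_minimal interior_subset hBc).antisymm' ?_
    calc f ⁻¹' B = closure (f ⁻¹' interior B) := by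
          rw [hf.closure_preimage_of_isOpen hd isOpen_interior, ← hB]
      _ ⊆ closure (interior (f ⁻¹' B)) :=
          closure_mono (interior_maximal (preimage_mono interior_subset)
            (isOpen_interior.preimage hf.continuous))

end DenseInducing

section ExcludedPoint

variable {X : Type*} [TopologicalSpace X] {p : X}

theorem interior_eq_sdiff_of_isOpen_iff (hX : ∀ V : Set X, IsOpen V ↔ V = univ ∨ p ∉ V)
    {V : Set X} (hV : V ≠ univ) : interior V = V \ {p} := by
  refine Subset.antisymm (fun q hq => ⟨interior_subset hq, ?_⟩)
    (interior_maximal sdiff_subset ((hX _).2 (Or.inr fun h => h.2 rfl)))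
  rintro rfl
  rcases (hX _).1 isOpen_interior with h | h
  · exact hV (eq_univ_of_univ_subset (h ▸ interior_subset))
  · exact h hq

theorem closure_eq_insert_of_isOpen_iff (hX : ∀ V : Set X, IsOpen V ↔ V = univ ∨ p ∉ V)
    {S : Set X} (hS : S.Nonempty) : closure S = insert p S := by
  rw [closure_eq_compl_interior_compl, interior_eq_sdiff_of_isOpen_iff hX, compl_sdiff,
    compl_compl, singleton_union]
  simpa [← nonempty_iff_ne_empty] using hS

theorem regularClosed_iff_of_isOpen_iff [Nontrivial X]
    (hX : ∀ V : Set X, IsOpen V ↔ V = univ ∨ p ∉ V) (A : Set X) :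
    A = closure (interior A) ↔ A = ∅ ∨ (p ∈ A ∧ (A \ {p}).Nonempty) := by
  by_cases hA : A = univ
  · subst hA
    obtain ⟨q, hq⟩ := exists_ne p
    simpa only [interior_univ, closure_univ, true_iff] using
      Or.inr ⟨mem_univ p, q, mem_univ q, hq⟩
  rw [interior_eq_sdiff_of_isOpen_iff hX hA]
  rcases (A \ {p}).eq_empty_or_nonempty with h | h
  · rw [h, closure_empty]
    simp
  · rw [closure_eq_insert_of_isOpen_iff hX h, insert_sdiff_singleton, eq_comm, insert_eq_self]
    simp only [h, (h.mono sdiff_subset).ne_empty, and_true, false_or]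

end ExcludedPoint

theorem Pt.isOpen_singleton_of_ne {t : Pt} (ha : t ≠ a) (hb : t ≠ b) : IsOpen ({t} : Set Pt) := by
  have hxz : IsOpen ({x, z} : Set Pt) := isOpen_generateFrom_of_mem (by simp)
  have hyz : IsOpen ({y, z} : Set Pt) := isOpen_generateFrom_of_mem (by simp)
  have hxay : IsOpen ({x, a, y} : Set Pt) := isOpen_generateFrom_of_mem (by simp)
  obtain rfl | rfl | rfl : t = x ∨ t = y ∨ t = z := by cases t <;> simp_all
  · convert hxz.inter hxay using 1
    ext t; cases t <;> simp
  · convert hyz.inter hxay using 1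
    ext t; cases t <;> simp
  · convert hxz.inter hyz using 1
    ext t; cases t <;> simp

theorem Pt.isOpen_iff (S : Set Pt) :
    IsOpen S ↔ S = univ ∨ (b ∉ S ∧ (a ∈ S → x ∈ S ∧ y ∈ S)) := by
  constructor
  · intro (h : GenerateOpen _ S)
    induction h with
    | basic U hU => rcases hU with rfl | rfl | rfl <;> simp
    | univ => exact Or.inl rfl
    | inter U V _ _ hU hV =>
      rcases hU with rfl | ⟨hbU, haU⟩
      · simpa using hV
      rcases hV with rfl | ⟨hbV, haV⟩
      · simpa using Or.inr ⟨hbU, haU⟩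
      · exact Or.inr ⟨fun h => hbU h.1,
          fun h => ⟨⟨(haU h.1).1, (haV h.2).1⟩, (haU h.1).2, (haV h.2).2⟩⟩
    | sUnion 𝒮 _ ih =>
      by_cases hu : univ ∈ 𝒮
      · exact Or.inl (eq_univ_of_univ_subset (subset_sUnion_of_mem hu))
      have h𝒮 : ∀ U ∈ 𝒮, b ∉ U ∧ (a ∈ U → x ∈ U ∧ y ∈ U) := fun U hU =>
        (ih U hU).resolve_left fun h => hu (h ▸ hU)
      refine Or.inr ⟨fun ⟨U, hU, hbU⟩ => (h𝒮 U hU).1 hbU, fun ⟨U, hU, haU⟩ => ?_⟩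
      exact ⟨⟨U, hU, ((h𝒮 U hU).2 haU).1⟩, U, hU, ((h𝒮 U hU).2 haU).2⟩
  · rintro (rfl | ⟨hb, ha⟩)
    · exact isOpen_univ
    refine isOpen_iff_forall_mem_open.2 fun t ht => ?_
    by_cases hta : t = a
    · subst hta
      obtain ⟨hx, hy⟩ := ha ht
      exact ⟨{x, a, y}, by simp [insert_subset_iff, *], isOpen_generateFrom_of_mem (by simp),
        by simp⟩
    · exact ⟨{t}, singleton_subset_iff.2 ht,
        Pt.isOpen_singleton_of_ne hta (by rintro rfl; exact hb ht), rfl⟩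

abbrev T' := {t : Pt // t ≠ a}

instance : Nontrivial T' := ⟨⟨x, nofun⟩, ⟨b, nofun⟩, by simp⟩

theorem T'.forall_iff {P : T' → Prop} :
    (∀ t, P t) ↔ P ⟨x, nofun⟩ ∧ P ⟨y, nofun⟩ ∧ P ⟨z, nofun⟩ ∧ P ⟨b, nofun⟩ := by
  refine ⟨fun h => ⟨h _, h _, h _, h _⟩, fun ⟨hx, hy, hz, hb⟩ => ?_⟩
  rintro ⟨_ | _ | _ | _ | _, h⟩ <;> first | assumption | exact absurd rfl h

theorem T'.exists_iff {P : T' → Prop} :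
    (∃ t, P t) ↔ P ⟨x, nofun⟩ ∨ P ⟨y, nofun⟩ ∨ P ⟨z, nofun⟩ ∨ P ⟨b, nofun⟩ := by
  simpa only [not_forall, not_and_or, not_not] using (T'.forall_iff (P := fun t => ¬P t)).not

theorem T'.isOpen_iff (V : Set T') : IsOpen V ↔ V = univ ∨ ⟨b, nofun⟩ ∉ V := by
  rw [isOpen_induced_iff]
  constructor
  · rintro ⟨U, hU, rfl⟩
    rcases (Pt.isOpen_iff U).1 hU with rfl | ⟨hb, -⟩
    · exact Or.inl preimage_univ
    · exact Or.inr hb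
  · rintro (rfl | hb)
    · exact ⟨univ, isOpen_univ, preimage_univ⟩
    refine ⟨Subtype.val '' V, (Pt.isOpen_iff _).2 (Or.inr ⟨?_, ?_⟩),
      preimage_image_eq V Subtype.val_injective⟩
    · rintro ⟨t, ht, h⟩
      exact hb ((Subtype.ext h : t = ⟨b, nofun⟩) ▸ ht)
    · rintro ⟨t, -, h⟩
      exact absurd h t.2

theorem T'.denseRange_val : DenseRange (Subtype.val : T' → Pt) := by
  intro t
  by_cases hta : t = a
  · subst hta
    refine mem_closure_iff.2 fun U hU haU => ⟨x, ?_, ⟨x, nofun⟩, rfl⟩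
    rcases (Pt.isOpen_iff U).1 hU with rfl | ⟨-, h⟩
    exacts [mem_univ x, (h haU).1]
  · exact subset_closure ⟨⟨t, hta⟩, rfl⟩

theorem T'.regularClosed_iff (A : Set T') :
    A = closure (interior A) ↔
      A ∈ ({∅, Subtype.val ⁻¹' {x, b}, Subtype.val ⁻¹' {y, b}, Subtype.val ⁻¹' {z, b},
        Subtype.val ⁻¹' {x, z, b}, Subtype.val ⁻¹' {y, z, b},
        Subtype.val ⁻¹' {x, y, b}, univ} : Set (Set T')) := by
  rw [regularClosed_iff_of_isOpen_iff T'.isOpen_iff]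
  simp only [Set.ext_iff, Set.Nonempty, T'.forall_iff, T'.exists_iff, mem_insert_iff,
    mem_singleton_iff, mem_preimage, mem_univ, mem_sdiff, mem_empty_iff_false]
  by_cases hx : ⟨x, nofun⟩ ∈ A <;> by_cases hy : ⟨y, nofun⟩ ∈ A <;>
    by_cases hz : ⟨z, nofun⟩ ∈ A <;> by_cases hb : ⟨b, nofun⟩ ∈ A <;> simp [hx, hy, hz, hb]

/-- In the subspace T' = T∖{a}, the regular closed subsets are exactly
the eight sets B∖{a} for B regular closed in T, i.e. ∅, {x,b}, {y,b}, {z,b},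
{x,z,b}, {y,z,b}, {x,y,b}, and T∖{a}. -/
theorem stmt7 :
    {A : Set {t : Pt // t ≠ a} | A = closure (interior A)} =
      (fun B : Set Pt => (Subtype.val ⁻¹' B : Set {t : Pt // t ≠ a})) ''
        {B : Set Pt | B = closure (interior B)} ∧
    {A : Set {t : Pt // t ≠ a} | A = closure (interior A)} =
      ({∅, Subtype.val ⁻¹' {x, b}, Subtype.val ⁻¹' {y, b}, Subtype.val ⁻¹' {z, b},
        Subtype.val ⁻¹' {x, z, b}, Subtype.val ⁻¹' {y, z, b},
        Subtype.val ⁻¹' {x, y, b}, Set.univ} : Set (Set {t : Pt // t ≠ a})) := by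
  refine ⟨IsInducing.subtypeVal.setOf_regularClosed_eq_image_preimage T'.denseRange_val, ?_⟩
  ext A
  exact T'.regularClosed_iff A
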